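/- arXiv:1709.02892 — 2 statements merged into one kernel-verified Lean document; each statement's English description precedes it below -/
import Mathlib

section
/- Let c ≤ 0 be a real number, g ≥ 1, and let λ₁ < λ₂ < ⋯ < λ_g be real numbers with positive integer multiplicities m₁, …, m_g such that for every i, ∑_{j≠i} m_j (c + λ_i λ_j)/(λ_i − λ_j) = 0 (the Cartan formula). Then g ≤ 2. -/
open Real Finset

/-- Auxiliary: if some principal curvature is positive, the Cartan formula with `c ≤ 0`
and `g ≥ 3` yields a contradiction. -/
theorem cartan_aux (c : ℝ) (hc : c ≤ 0) (g : ℕ) (hg : 3 ≤ g)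
    (lam : Fin g → ℝ) (hlam : StrictMono lam)
    (m : Fin g → ℕ) (hm : ∀ i, 0 < m i)
    (hcartan : ∀ i : Fin g,
      ∑ j ∈ Finset.univ.erase i, (m j : ℝ) * (c + lam i * lam j) / (lam i - lam j) = 0)
    (hpos : ∃ k, 0 < lam k) : False := by
  classical
  obtain ⟨k, hk⟩ := hpos
  have hg0 : 0 < g := by omega
  set S : Finset (Fin g) :=
    Finset.univ.filter (fun i => 0 < lam i ∧ ∀ j, i < j → 0 ≤ c + lam i * lam j) with hS
  have htop : (⟨g - 1, by omega⟩ : Fin g) ∈ S := by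
    rw [hS, Finset.mem_filter]
    refine ⟨Finset.mem_univ _, lt_of_lt_of_le hk (hlam.monotone ?_), fun j hj => ?_⟩
    · rw [Fin.le_def]; simp only [Fin.val_mk]; omega
    · rw [Fin.lt_def] at hj; simp only [Fin.val_mk] at hj; omega
  have hne : S.Nonempty := ⟨_, htop⟩
  set i := S.min' hne with hi
  have hiS : i ∈ S := S.min'_mem hne
  rw [hS, Finset.mem_filter] at hiS
  have hipos : 0 < lam i := hiS.2.1
  have habove : ∀ j, i < j → 0 ≤ c + lam i * lam j := hiS.2.2
  -- key claim: everything below i gives nonpositive numerator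
  have hbelow : ∀ j, j < i → c + lam i * lam j ≤ 0 := by
    intro j hj
    by_cases hlj : lam j ≤ 0
    · nlinarith [mul_nonpos_of_nonneg_of_nonpos hipos.le hlj]
    push_neg at hlj
    have hi1 : 1 ≤ i.val := by
      have := Fin.lt_def.mp hj; omega
    set i' : Fin g := ⟨i.val - 1, by omega⟩ with hi'
    have hji' : j ≤ i' := Fin.le_def.mpr (by have := Fin.lt_def.mp hj; simp [hi']; omega)
    have hi'i : i' < i := Fin.lt_def.mpr (by simp [hi']; omega)
    have hi'pos : 0 < lam i' := lt_of_lt_of_le hlj (hlam.monotone hji')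
    have hi'notS : i' ∉ S := fun h => absurd (S.min'_le i' h) (not_le.mpr hi'i)
    rw [hS, Finset.mem_filter] at hi'notS
    push_neg at hi'notS
    obtain ⟨kk, hkk1, hkk2⟩ := hi'notS (Finset.mem_univ _) hi'pos
    have hik : i ≤ kk := Fin.le_def.mpr (by have := Fin.lt_def.mp hkk1; simp [hi'] at this; omega)
    have h1 : c + lam i' * lam i < 0 := by
      have := hlam.monotone hik
      nlinarith
    have h2 : lam j ≤ lam i' := hlam.monotone hji'
    nlinarith
  -- all terms of the Cartan sum at i are nonpositive
  have hterm : ∀ j ∈ Finset.univ.erase i,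
      (m j : ℝ) * (c + lam i * lam j) / (lam i - lam j) ≤ 0 := by
    intro j hj
    have hji : j ≠ i := Finset.ne_of_mem_erase hj
    rcases lt_or_gt_of_ne hji with h | h
    · apply div_nonpos_of_nonpos_of_nonneg
      · exact mul_nonpos_of_nonneg_of_nonpos (by positivity) (hbelow j h)
      · have := hlam h; linarith
    · apply div_nonpos_of_nonneg_of_nonpos
      · exact mul_nonneg (by positivity) (habove j h)
      · have := hlam h; linarith
  have hzero : ∀ j ∈ Finset.univ.erase i,
      (m j : ℝ) * (c + lam i * lam j) / (lam i - lam j) = 0 :=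
    (Finset.sum_eq_zero_iff_of_nonpos hterm).mp (hcartan i)
  have hnum : ∀ j ∈ Finset.univ.erase i, c + lam i * lam j = 0 := by
    intro j hj
    have hji : j ≠ i := Finset.ne_of_mem_erase hj
    have hd : lam i - lam j ≠ 0 := sub_ne_zero.mpr fun h => hji (hlam.injective h.symm)
    have := hzero j hj
    rcases div_eq_zero_iff.mp this with h | h
    · rcases mul_eq_zero.mp h with h' | h'
      · exact absurd h' (by exact_mod_cast (hm j).ne')
      · exact h'
    · exact absurd h hd
  -- two distinct indices other than i
  have hcard : 1 < (Finset.univ.erase i).card := by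
    rw [Finset.card_erase_of_mem (Finset.mem_univ _), Finset.card_univ, Fintype.card_fin]
    omega
  obtain ⟨a, ha, b, hb, hab⟩ := Finset.one_lt_card.mp hcard
  have h1 := hnum a ha
  have h2 := hnum b hb
  have : lam a = lam b := by
    have : lam i * lam a = lam i * lam b := by linarith
    exact mul_left_cancel₀ hipos.ne' this
  exact hab (hlam.injective this)

/-- Cartan's formula with `c ≤ 0` forces at most two distinct principal curvatures. -/
theorem cartan_nonpos_curvature_at_most_two (c : ℝ) (hc : c ≤ 0) (g : ℕ) (hg : 1 ≤ g)
    (lam : Fin g → ℝ) (hlam : StrictMono lam)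
    (m : Fin g → ℕ) (hm : ∀ i, 0 < m i)
    (hcartan : ∀ i : Fin g,
      ∑ j ∈ Finset.univ.erase i, (m j : ℝ) * (c + lam i * lam j) / (lam i - lam j) = 0) :
    g ≤ 2 := by
  by_contra hgt
  have hg3 : 3 ≤ g := by omega
  by_cases hpos : ∃ k, 0 < lam k
  · exact cartan_aux c hc g hg3 lam hlam m hm hcartan hpos
  · -- all lam ≤ 0; negate and reverse
    push_neg at hpos
    set lam' : Fin g → ℝ := fun j => - lam j.rev with hlam'
    set m' : Fin g → ℕ := fun j => m j.rev with hm'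
    have hmono : StrictMono lam' := by
      intro a b hab
      have : b.rev < a.rev := by
        rw [Fin.lt_def] at hab ⊢
        simp [Fin.rev]
        omega
      have := hlam this
      simp [hlam']
      linarith
    have hrev : ∀ (f : Fin g → ℝ) (i : Fin g),
        ∑ j ∈ Finset.univ.erase i, f j.rev = ∑ j ∈ Finset.univ.erase i.rev, f j := by
      intro f i
      apply Finset.sum_nbij' (fun j => Fin.rev j) (fun j => Fin.rev j)
      · intro a ha
        simp only [Finset.mem_erase, Finset.mem_univ, and_true] at ha ⊢
        exact fun h => ha (by rw [← Fin.rev_rev a, h, Fin.rev_rev])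
      · intro a ha
        simp only [Finset.mem_erase, Finset.mem_univ, and_true] at ha ⊢
        exact fun h => ha (by rw [← h, Fin.rev_rev])
      · intro a _; exact Fin.rev_rev a
      · intro a _; exact Fin.rev_rev a
      · intro a _; rfl
    have hcartan' : ∀ i : Fin g,
        ∑ j ∈ Finset.univ.erase i, (m' j : ℝ) * (c + lam' i * lam' j) / (lam' i - lam' j) = 0 := by
      intro i
      have heq : ∀ j, (m' j : ℝ) * (c + lam' i * lam' j) / (lam' i - lam' j)
          = - ((m j.rev : ℝ) * (c + lam i.rev * lam j.rev) / (lam i.rev - lam j.rev)) := by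
        intro j
        simp only [hlam', hm']
        rw [show c + -lam i.rev * -lam j.rev = c + lam i.rev * lam j.rev from by ring,
          show -lam i.rev - -lam j.rev = -(lam i.rev - lam j.rev) from by ring, div_neg]
      rw [Finset.sum_congr rfl (fun j _ => heq j), Finset.sum_neg_distrib,
        hrev (fun j => (m j : ℝ) * (c + lam i.rev * lam j) / (lam i.rev - lam j)) i,
        hcartan i.rev, neg_zero]
    have hpos' : ∃ k, 0 < lam' k := by
      refine ⟨Fin.rev ⟨0, by omega⟩, ?_⟩
      simp only [hlam', Fin.rev_rev]
      have h01 : (⟨0, by omega⟩ : Fin g) < ⟨1, by omega⟩ := Fin.lt_def.mpr (by simp)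
      have := hlam h01
      have := hpos ⟨1, by omega⟩
      linarith
    exact cartan_aux c hc g hg3 lam' hmono m' (fun i => hm _) hcartan' hpos'
end

section
/- Let g ≥ 1, c > 0, and suppose distinct reals λ₁, …, λ_g with positive integer multiplicities m₁, …, m_g satisfy the Cartan formula ∑_{j≠i} m_j (c + λ_i λ_j)/(λ_i − λ_j) = 0 for all i, with λ_i = √c cot θ_i, θ_i = θ₁ + (i−1)π/g. If g is even, then the multiset {m₁, …, m_g} contains at most two distinct values. -/
/-!
Writing `λᵢ = √c cot θᵢ`, each Cartan quotient is `(c + λᵢλⱼ)/(λᵢ - λⱼ) = -√c cot (θᵢ - θⱼ)`, and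
`θᵢ - θⱼ = (i - j)π/g`. So the Cartan formula says that convolution on `ℤ/g` with the kernel
`κ k = cot (π k / g)` kills the multiplicity function `m`. The discrete Fourier transform of `κ` at
a frequency `ℓ ∈ {1, …, g - 1}` is `i (2ℓ - g)`, which vanishes only for `2ℓ = g`. Hence `m̂` is
supported on the frequencies with `2ℓ ≡ 0 (mod g)`, which means `m (k + 2) = m k`.
-/

open Real Finset

lemma Real.cot_sub_of_sin_ne_zero {a b : ℝ} (ha : sin a ≠ 0) (hb : sin b ≠ 0) :
    cot (a - b) = (cot a * cot b + 1) / (cot b - cot a) := by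
  have hab : sin a * sin b ≠ 0 := mul_ne_zero ha hb
  have hnum : cot a * cot b + 1 = cos (a - b) / (sin a * sin b) := by
    rw [cot_eq_cos_div_sin, cot_eq_cos_div_sin, cos_sub]
    field_simp
  have hden : cot b - cot a = sin (a - b) / (sin a * sin b) := by
    rw [cot_eq_cos_div_sin, cot_eq_cos_div_sin, sin_sub]
    field_simp
  rw [hnum, hden, div_div_div_cancel_right₀ hab, cot_eq_cos_div_sin]

lemma cartan_quotient_eq_neg_sqrt_mul_cot_sub {c a b : ℝ} (hc : 0 ≤ c) (ha : sin a ≠ 0)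
    (hb : sin b ≠ 0) :
    (c + √c * cot a * (√c * cot b)) / (√c * cot a - √c * cot b) = -(√c * cot (a - b)) := by
  rcases hc.eq_or_lt with rfl | hc
  · simp
  have hs : √c ≠ 0 := (sqrt_pos.2 hc).ne'
  have hnum : c + √c * cot a * (√c * cot b) = √c * (√c * (cot a * cot b + 1)) := by
    linear_combination -mul_self_sqrt hc.le
  have hden : √c * cot a - √c * cot b = -(√c * (cot b - cot a)) := by ring
  rw [cot_sub_of_sin_ne_zero ha hb, hnum, hden, div_neg, mul_div_mul_left _ _ hs, mul_div_assoc]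

lemma sum_cartan_quotient_eq {ι : Type*} [Fintype ι] [DecidableEq ι] {c : ℝ} (hc : 0 ≤ c)
    {θ : ι → ℝ} (hθ : ∀ j, sin (θ j) ≠ 0) (w : ι → ℝ) (i : ι) :
    ∑ j ∈ univ.erase i, w j * (c + √c * cot (θ i) * (√c * cot (θ j)))
        / (√c * cot (θ i) - √c * cot (θ j))
      = -√c * ∑ j, w j * cot (θ i - θ j) := by
  rw [Finset.mul_sum, ← Finset.sum_erase univ (a := i) (by simp [cot_eq_cos_div_sin])]
  refine Finset.sum_congr rfl fun j _ ↦ ?_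
  rw [mul_div_assoc, cartan_quotient_eq_neg_sqrt_mul_cot_sub hc (hθ i) (hθ j)]
  ring

lemma sin_equally_spaced_ne_zero {g : ℕ} {θ₁ : ℝ} (h0 : 0 < θ₁) (h1 : θ₁ < π / g) (i : Fin g) :
    sin (θ₁ + (i : ℕ) * (π / g)) ≠ 0 := by
  have hg : (0 : ℝ) < g := by exact_mod_cast i.pos
  have hi : ((i : ℕ) : ℝ) + 1 ≤ g := by exact_mod_cast i.isLt
  refine (sin_pos_of_pos_of_lt_pi (by positivity) ?_).ne'
  calc θ₁ + (i : ℕ) * (π / g) < ((i : ℕ) + 1) * (π / g) := by linarith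
    _ ≤ g * (π / g) := by gcongr
    _ = π := mul_div_cancel₀ π hg.ne'

lemma Function.Periodic.apply_natCast_eq_or_of_period_two {R α : Type*} [Semiring R] {f : R → α}
    (h : Function.Periodic f 2) (n : ℕ) : f n = f 0 ∨ f n = f 1 := by
  have hn : f n = f (n % 2 : ℕ) := by
    rw [← h.nat_mul (n / 2) (n % 2 : ℕ)]
    congr 1
    norm_cast
    rw [Nat.mod_add_div']
  rcases Nat.mod_two_eq_zero_or_one n with h2 | h2 <;> simp [hn, h2]

open Fin.CommRing in
lemma ZMod.finEquiv_apply (g : ℕ) [NeZero g] (i : Fin g) : ZMod.finEquiv g i = (i : ℕ) := by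
  rw [← map_natCast (ZMod.finEquiv g), Fin.cast_val_eq_self]

section Fourier

open Complex ZMod

variable {N : ℕ} [NeZero N]

lemma dft_comp_add_right_apply (M : ZMod N → ℂ) (a ℓ : ZMod N) :
    𝓕 (fun j ↦ M (j + a)) ℓ = stdAddChar (a * ℓ) * 𝓕 M ℓ := by
  simp only [dft_apply, smul_eq_mul, Finset.mul_sum]
  refine Fintype.sum_equiv (Equiv.addRight a) _ _ fun j ↦ ?_
  simp only [Equiv.coe_addRight, ← mul_assoc, ← AddChar.map_add_eq_mul]
  ring_nf

lemma dft_conv_apply (κ M : ZMod N → ℂ) (ℓ : ZMod N) :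
    𝓕 (fun i ↦ ∑ j, κ (i - j) * M j) ℓ = 𝓕 κ ℓ * 𝓕 M ℓ := by
  simp only [dft_apply, smul_eq_mul, Finset.mul_sum, Finset.sum_mul]
  rw [Finset.sum_comm]
  refine Fintype.sum_congr _ _ fun j ↦ ?_
  refine Fintype.sum_equiv (Equiv.subRight j) _ _ fun i ↦ ?_
  simp only [Equiv.subRight_apply]
  rw [show -(i * ℓ) = -((i - j) * ℓ) + -(j * ℓ) by ring, AddChar.map_add_eq_mul]
  ring

lemma periodic_two_of_conv_eq_zero {κ M : ZMod N → ℂ} (hκ : ∀ ℓ, 𝓕 κ ℓ = 0 → 2 * ℓ = 0)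
    (hM : ∀ i, ∑ j, κ (i - j) * M j = 0) : Function.Periodic M 2 := by
  suffices h : 𝓕 (fun j ↦ M (j + 2)) = 𝓕 M from congrFun (dft.injective h)
  ext ℓ
  rw [dft_comp_add_right_apply]
  by_cases hℓ : 𝓕 κ ℓ = 0
  · rw [hκ ℓ hℓ, AddChar.map_zero_eq_one, one_mul]
  · have h := dft_conv_apply κ M ℓ
    simp only [hM, ← Pi.zero_def, map_zero, Pi.zero_apply] at h
    rw [(mul_eq_zero.1 h.symm).resolve_left hℓ, mul_zero]

end Fourier

section CotKernel

open Complex ZMod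

/-- `cotKernel N x = cot (π x / N)` (see `cotKernel_intCast`), written through `stdAddChar` so
that it is visibly a function on `ZMod N`. At `x = 0` it is the junk value `0`, as is
`Real.cot 0`. -/
noncomputable def cotKernel (N : ℕ) [NeZero N] (x : ZMod N) : ℂ :=
  (stdAddChar x + 1) / (I * (1 - stdAddChar x))

variable {N : ℕ} [NeZero N]

lemma cotKernel_intCast (a : ℤ) : cotKernel N a = Real.cot (π * a / N) := by
  rw [cotKernel, stdAddChar_coe, ofReal_cot]
  push_cast
  rw [mul_div_assoc (π : ℂ), cot_pi_eq_exp_ratio, mul_div_assoc]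

lemma cotKernel_zero : cotKernel N 0 = 0 := by
  simp [cotKernel]

lemma cotKernel_neg (x : ZMod N) : cotKernel N (-x) = -cotKernel N x := by
  have hw0 : stdAddChar x ≠ 0 := Circle.coe_ne_zero _
  rw [cotKernel, cotKernel, AddChar.map_neg_eq_inv]
  rcases eq_or_ne (stdAddChar x) 1 with h1 | h1
  · simp [h1]
  · have : 1 - stdAddChar x ≠ 0 := sub_ne_zero.2 h1.symm
    have : stdAddChar x - 1 ≠ 0 := sub_ne_zero.2 h1
    field_simp
    ring

lemma sum_cotKernel : ∑ x, cotKernel N x = 0 := by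
  have h : ∑ x, cotKernel N (-x) = ∑ x, cotKernel N x :=
    Fintype.sum_equiv (Equiv.neg _) _ _ fun _ ↦ rfl
  simp only [cotKernel_neg, Finset.sum_neg_distrib] at h
  exact CharZero.eq_neg_self_iff.1 h.symm

/-- For `x ≠ 0` this is `w ^ n - 1 = (w - 1) * ∑ s < n, w ^ s` at `w = stdAddChar x`; the last term
corrects for the junk value at `x = 0`. -/
lemma cotKernel_mul_pow (x : ZMod N) (n : ℕ) :
    cotKernel N x * stdAddChar x ^ n = cotKernel N x
      + I * (∑ s ∈ range (n + 1), stdAddChar x ^ s + ∑ s ∈ range n, stdAddChar x ^ s - 1)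
      - if x = 0 then 2 * I * n else 0 := by
  rcases eq_or_ne x 0 with rfl | hx
  · simp only [cotKernel_zero, AddChar.map_zero_eq_one, one_pow, sum_const, card_range,
      nsmul_eq_mul, mul_one, if_true]
    push_cast
    ring
  · have h1 : 1 - stdAddChar x ≠ 0 := by
      rw [sub_ne_zero, ne_comm, ← AddChar.map_zero_eq_one (stdAddChar (N := N))]
      exact injective_stdAddChar.ne hx
    rw [if_neg hx, sub_zero, cotKernel]
    field_simp
    linear_combination (stdAddChar x - 1) * (∑ s ∈ range (n + 1), stdAddChar x ^ s
      + ∑ s ∈ range n, stdAddChar x ^ s - 1) * I_sq + mul_neg_geom_sum (stdAddChar x) (n + 1)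
      + mul_neg_geom_sum (stdAddChar x) n

lemma sum_sum_range_stdAddChar_pow {n : ℕ} (hn0 : 0 < n) (hn : n ≤ N) :
    ∑ x : ZMod N, ∑ s ∈ range n, stdAddChar x ^ s = N := by
  rw [Finset.sum_comm, Finset.sum_eq_single_of_mem 0 (mem_range.2 hn0)]
  · simp
  · intro s hs hs0
    have hs : ¬N ∣ s :=
      Nat.not_dvd_of_pos_of_lt (Nat.pos_of_ne_zero hs0) ((mem_range.1 hs).trans_le hn)
    simp_rw [← AddChar.map_nsmul_eq_pow, nsmul_eq_mul, mul_comm]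
    rw [AddChar.sum_mulShift _ (isPrimitive_stdAddChar N),
      if_neg (mt (natCast_eq_zero_iff s N).1 hs), Nat.cast_zero]

lemma sum_cotKernel_mul_pow {n : ℕ} (hn0 : 0 < n) (hn : n < N) :
    ∑ x, cotKernel N x * stdAddChar x ^ n = I * (N - 2 * n) := by
  simp only [cotKernel_mul_pow, Finset.sum_sub_distrib, Finset.sum_add_distrib, ← Finset.mul_sum,
    sum_cotKernel, sum_sum_range_stdAddChar_pow (Nat.succ_pos n) hn,
    sum_sum_range_stdAddChar_pow hn0 hn.le, Finset.sum_ite_eq', mem_univ, if_true, sum_const,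
    card_univ, ZMod.card, nsmul_eq_mul, mul_one]
  ring

lemma two_mul_eq_zero_of_dft_cotKernel_eq_zero {ℓ : ZMod N} (h : 𝓕 (cotKernel N) ℓ = 0) :
    2 * ℓ = 0 := by
  rcases eq_or_ne ℓ 0 with rfl | hℓ
  · exact mul_zero 2
  set n := (-ℓ).val with hn
  have hdft : 𝓕 (cotKernel N) ℓ = ∑ x, cotKernel N x * stdAddChar x ^ n := by
    refine Fintype.sum_congr _ _ fun x ↦ ?_
    rw [smul_eq_mul, mul_comm, ← AddChar.map_nsmul_eq_pow, nsmul_eq_mul, hn, natCast_zmod_val]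
    ring_nf
  rw [hdft, sum_cotKernel_mul_pow (val_pos.2 (neg_ne_zero.2 hℓ)) (val_lt _), mul_eq_zero,
    sub_eq_zero] at h
  have hN : N = 2 * n := by exact_mod_cast h.resolve_left I_ne_zero
  have : ((2 * n : ℕ) : ZMod N) = 0 := by rw [← hN, natCast_self]
  rw [Nat.cast_mul, hn, natCast_zmod_val] at this
  simpa using this

lemma cot_sub_equally_spaced (θ₁ : ℝ) (i j : Fin N) :
    (Real.cot ((θ₁ + (i : ℕ) * (π / N)) - (θ₁ + (j : ℕ) * (π / N))) : ℂ)
      = cotKernel N ((i : ℕ) - (j : ℕ)) := by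
  rw [show (θ₁ + (i : ℕ) * (π / N)) - (θ₁ + (j : ℕ) * (π / N)) = π * ((i : ℤ) - (j : ℤ) : ℤ) / N by
    push_cast; ring, ← cotKernel_intCast]
  push_cast
  rfl

end CotKernel

theorem cartan_even_at_most_two_multiplicities_general (c : ℝ) (hc : 0 < c) (g : ℕ)
    (θ₁ : ℝ) (hθ₁ : 0 < θ₁) (hθ₁' : θ₁ < π / g)
    (θ lam : Fin g → ℝ)
    (hθ : ∀ i : Fin g, θ i = θ₁ + (i : ℕ) * (π / g))
    (hlam : ∀ i, lam i = Real.sqrt c * Real.cot (θ i))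
    (m : Fin g → ℕ)
    (hcartan : ∀ i : Fin g,
      ∑ j ∈ Finset.univ.erase i, (m j : ℝ) * (c + lam i * lam j) / (lam i - lam j) = 0) :
    ∃ a b : ℕ, ∀ i, m i = a ∨ m i = b := by
  -- for `g = 0`, `π / g = 0` would force `θ₁ < 0`
  have : NeZero g := ⟨by rintro rfl; simp at hθ₁'; linarith⟩
  have hsin : ∀ i, sin (θ i) ≠ 0 := fun i ↦ hθ i ▸ sin_equally_spaced_ne_zero hθ₁ hθ₁' i
  have hcot : ∀ i, ∑ j, (m j : ℝ) * cot (θ i - θ j) = 0 := fun i ↦ by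
    have h := hcartan i
    simp only [hlam, sum_cartan_quotient_eq hc.le hsin] at h
    exact (mul_eq_zero.1 h).resolve_left (neg_ne_zero.2 (sqrt_pos.2 hc).ne')
  have hconv : ∀ x, ∑ y, cotKernel g (x - y) * m ((ZMod.finEquiv g).symm y) = 0 := fun x ↦ by
    obtain ⟨i, rfl⟩ := (ZMod.finEquiv g).surjective x
    have h := congrArg ((↑) : ℝ → ℂ) (hcot i)
    simp only [hθ, Complex.ofReal_sum, Complex.ofReal_mul, cot_sub_equally_spaced,
      Complex.ofReal_natCast, Complex.ofReal_zero] at h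
    refine (Fintype.sum_equiv (ZMod.finEquiv g).toEquiv _ _ fun j ↦ ?_).symm.trans h
    rw [RingEquiv.toEquiv_eq_coe, EquivLike.coe_coe, RingEquiv.symm_apply_apply,
      ZMod.finEquiv_apply, ZMod.finEquiv_apply, mul_comm]
  have hper := periodic_two_of_conv_eq_zero (fun _ ↦ two_mul_eq_zero_of_dft_cotKernel_eq_zero) hconv
  refine ⟨m ((ZMod.finEquiv g).symm 0), m ((ZMod.finEquiv g).symm 1), fun i ↦ ?_⟩
  have := hper.apply_natCast_eq_or_of_period_two i
  rwa [← ZMod.finEquiv_apply, RingEquiv.symm_apply_apply, Nat.cast_inj, Nat.cast_inj] at this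

/-- For even `g`, the Cartan formula with equally spaced angles forces at most two
distinct multiplicities. -/
theorem cartan_even_at_most_two_multiplicities (c : ℝ) (hc : 0 < c)
    (g : ℕ) (hg : 1 ≤ g) (hge : Even g)
    (θ₁ : ℝ) (hθ₁ : 0 < θ₁) (hθ₁' : θ₁ < π / g)
    (θ lam : Fin g → ℝ)
    (hθ : ∀ i : Fin g, θ i = θ₁ + (i : ℕ) * (π / g))
    (hlam : ∀ i, lam i = Real.sqrt c * Real.cot (θ i))
    (hdist : Function.Injective lam)
    (m : Fin g → ℕ) (hm : ∀ i, 0 < m i)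
    (hcartan : ∀ i : Fin g,
      ∑ j ∈ Finset.univ.erase i, (m j : ℝ) * (c + lam i * lam j) / (lam i - lam j) = 0) :
    ∃ a b : ℕ, ∀ i, m i = a ∨ m i = b :=
  cartan_even_at_most_two_multiplicities_general c hc g θ₁ hθ₁ hθ₁' θ lam hθ hlam m hcartan
end
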